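/- Let n ≥ 2, let H be a closed subspace of a complex Hilbert space K, and let V_1,…,V_n be commuting bounded operators on K such that V_n is an isometry, V_j = V_{n−j}^* V_n for j = 1,…,n−1, and H is invariant under each adjoint V_j^*. Define S_j := P_H V_j|_H, let D := (I_H − S_n^* S_n)^{1/2}, and let Q be the orthogonal projection of H onto (ker D)^⊥. Suppose E_1,…,E_{n−1} are bounded operators on H satisfying E_j = Q E_j Q, S_j − S_{n−j}^* S_n = D E_j D, and moreover the relations D S_j = E_j D + E_{n−j}^* D S_n for j = 1,…,n−1. Then for every i = 1,…,n−1 and every x ∈ ker D one has (E_i^* E_{n−i}^* − E_{n−i}^* E_i^*) D S_n x = 0; that is, the operator (E_i^* E_{n−i}^* − E_{n−i}^* E_i^*) D S_n vanishes on ker D. -/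

import Mathlib

/-!
Put `j = n - i` and `y = D Sₙ x`. At `x ∈ ker D` the fundamental relations give `Eⱼ* y = D Sᵢ x`
and `Eᵢ* y = D Sⱼ x`, so `g = (Eᵢ* Eⱼ* - Eⱼ* Eᵢ*) y = Eᵢ* D Sᵢ x - Eⱼ* D Sⱼ x`. The adjoint of
`Sᵢ - Sⱼ* Sₙ = D Eᵢ D` turns `D g` into `Sᵢ* Sᵢ x - Sₙ* Sⱼ Sᵢ x - Sⱼ* Sⱼ x + Sₙ* Sᵢ Sⱼ x`, which
vanishes because `Sᵢ x = Sⱼ* Sₙ x`, `Sⱼ x = Sᵢ* Sₙ x` and `Sᵢ`, `Sⱼ` commute (compressions of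
commuting operators to a subspace invariant under their adjoints commute). So `g ∈ ker D`, while
`Eₖ* = Q Eₖ* Q` puts `g` in `range Q = (ker D)ᗮ`; hence `g = 0`.
-/

open ContinuousLinearMap

section Compression

variable {𝕜 K : Type*} [RCLike 𝕜] [NormedAddCommGroup K] [InnerProductSpace 𝕜 K] [CompleteSpace K]
  {U : Submodule 𝕜 K} {A B : K →L[𝕜] K}

theorem Submodule.apply_mem_orthogonal_of_adjoint_mem (hA : ∀ u : U, adjoint A u ∈ U) {y : K}
    (hy : y ∈ Uᗮ) : A y ∈ Uᗮ := fun u hu => by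
  rw [← adjoint_inner_left]
  exact hy _ (hA ⟨u, hu⟩)

theorem Submodule.orthogonalProjectionOnto_apply_starProjection [U.HasOrthogonalProjection]
    (hA : ∀ u : U, adjoint A u ∈ U) (y : K) :
    U.orthogonalProjectionOnto (A (U.starProjection y)) = U.orthogonalProjectionOnto (A y) := by
  have h := U.orthogonalProjectionOnto_apply_of_mem_orthogonal
    (U.apply_mem_orthogonal_of_adjoint_mem hA (U.sub_starProjection_mem_orthogonal y))
  rwa [map_sub, map_sub, sub_eq_zero, eq_comm] at h

theorem Submodule.compression_comp_compression [U.HasOrthogonalProjection]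
    (hA : ∀ u : U, adjoint A u ∈ U) :
    (U.orthogonalProjectionOnto.comp (A.comp U.subtypeL)).comp
        (U.orthogonalProjectionOnto.comp (B.comp U.subtypeL)) =
      U.orthogonalProjectionOnto.comp ((A.comp B).comp U.subtypeL) :=
  ContinuousLinearMap.ext fun u => U.orthogonalProjectionOnto_apply_starProjection hA (B u)

theorem Submodule.commute_compression [U.HasOrthogonalProjection]
    (hA : ∀ u : U, adjoint A u ∈ U) (hB : ∀ u : U, adjoint B u ∈ U) (hAB : Commute A B) :
    Commute (U.orthogonalProjectionOnto.comp (A.comp U.subtypeL))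
      (U.orthogonalProjectionOnto.comp (B.comp U.subtypeL)) := by
  rw [commute_iff_eq, ContinuousLinearMap.mul_def, ContinuousLinearMap.mul_def,
    U.compression_comp_compression hA, U.compression_comp_compression hB]
  exact congrArg (fun C => U.orthogonalProjectionOnto.comp (C.comp U.subtypeL)) hAB.eq

end Compression

section FundamentalOperators

variable {𝕜 H : Type*} [RCLike 𝕜] [NormedAddCommGroup H] [InnerProductSpace 𝕜 H] [CompleteSpace H]
  {D T A B F G : H →L[𝕜] H}

theorem mul_adjoint_mul_eq_adjoint_sub_adjoint_mul (hD : IsSelfAdjoint D)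
    (hA : A - adjoint B * T = D * F * D) :
    D * adjoint F * D = adjoint A - adjoint T * B := by
  have h := congrArg star hA
  simpa only [star_sub, star_mul, star_star, hD.star_eq, star_eq_adjoint, adjoint_adjoint,
    mul_assoc] using h.symm

theorem apply_eq_adjoint_apply_of_apply_eq_zero (hA : A - adjoint B * T = D * F * D) {x : H}
    (hx : D x = 0) : A x = adjoint B (T x) := by
  have h := congrArg (· x) hA
  simpa [sub_eq_zero, hx] using h

theorem adjoint_apply_eq_of_apply_eq_zero (hfA : D * A = F * D + adjoint G * D * T) {x : H}
    (hx : D x = 0) : adjoint G (D (T x)) = D (A x) := by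
  have h := congrArg (· x) hfA
  simpa [hx] using h.symm

theorem apply_adjoint_commutator_apply_eq_zero (hD : IsSelfAdjoint D) (hAB : Commute A B)
    (hA : A - adjoint B * T = D * F * D) (hB : B - adjoint A * T = D * G * D)
    (hfA : D * A = F * D + adjoint G * D * T) (hfB : D * B = G * D + adjoint F * D * T)
    {x : H} (hx : D x = 0) :
    D ((adjoint F * adjoint G - adjoint G * adjoint F) (D (T x))) = 0 := by
  have hAA : adjoint A (A x) = adjoint B (B x) := by
    rw [apply_eq_adjoint_apply_of_apply_eq_zero hA hx,
      apply_eq_adjoint_apply_of_apply_eq_zero hB hx]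
    simpa only [star_eq_adjoint, mul_apply_eq_comp] using congrArg (· (T x)) hAB.star_star.eq
  calc D ((adjoint F * adjoint G - adjoint G * adjoint F) (D (T x)))
      = (D * adjoint F * D) (A x) - (D * adjoint G * D) (B x) := by
        simp [adjoint_apply_eq_of_apply_eq_zero hfA hx, adjoint_apply_eq_of_apply_eq_zero hfB hx]
    _ = adjoint A (A x) - adjoint T (B (A x)) - (adjoint B (B x) - adjoint T (A (B x))) := by
        rw [mul_adjoint_mul_eq_adjoint_sub_adjoint_mul hD hA,
          mul_adjoint_mul_eq_adjoint_sub_adjoint_mul hD hB]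
        rfl
    _ = 0 := by rw [hAA, ← mul_apply_eq_comp B A, ← hAB.eq, mul_apply_eq_comp, sub_self]

theorem adjoint_apply_mem_range_of_eq_mul_mul {Q E : H →L[𝕜] H} (hQ : IsSelfAdjoint Q)
    (hE : E = Q * E * Q) (y : H) : adjoint E y ∈ LinearMap.range (Q : H →ₗ[𝕜] H) := by
  rw [hE, ← star_eq_adjoint, star_mul, star_mul, hQ.star_eq, mul_apply_eq_comp]
  exact ⟨_, rfl⟩

end FundamentalOperators

theorem stmt_4_general {K : Type*} [NormedAddCommGroup K] [InnerProductSpace ℂ K] [CompleteSpace K]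
    (Hs : Submodule ℂ K) [CompleteSpace Hs]
    (n : ℕ)
    (V : ℕ → (K →L[ℂ] K))
    (hVcomm : ∀ i j, 1 ≤ i → i ≤ n → 1 ≤ j → j ≤ n → V i * V j = V j * V i)
    (hinv : ∀ j, 1 ≤ j → j ≤ n → ∀ h : Hs, adjoint (V j) (h : K) ∈ Hs)
    (S : ℕ → (Hs →L[ℂ] Hs))
    (hS : ∀ j, 1 ≤ j → j ≤ n →
      S j = Hs.orthogonalProjectionOnto.comp ((V j).comp Hs.subtypeL))
    (D : Hs →L[ℂ] Hs)
    (hDpos : D.IsPositive)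
    (Q : Hs →L[ℂ] Hs)
    -- `Q` is the orthogonal projection of `H` onto `(ker D)ᗮ`: the self-adjoint idempotent
    -- with range `(ker D)ᗮ`
    (hQsa : IsSelfAdjoint Q)
    (hQran : LinearMap.range (Q : Hs →ₗ[ℂ] Hs) = (LinearMap.ker (D : Hs →ₗ[ℂ] Hs))ᗮ)
    (E : ℕ → (Hs →L[ℂ] Hs))
    (hEQ : ∀ j, 1 ≤ j → j ≤ n - 1 → E j = Q * E j * Q)
    (hE : ∀ j, 1 ≤ j → j ≤ n - 1 → S j - adjoint (S (n - j)) * S n = D * E j * D)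
    (hfund : ∀ j, 1 ≤ j → j ≤ n - 1 →
      D * S j = E j * D + adjoint (E (n - j)) * D * S n) :
    ∀ i, 1 ≤ i → i ≤ n - 1 → ∀ x : Hs, D x = 0 →
      (adjoint (E i) * adjoint (E (n - i)) - adjoint (E (n - i)) * adjoint (E i))
        (D (S n x)) = 0 := by
  intro i hi hin x hx
  have hni : n - (n - i) = i := by omega
  have hcomm : Commute (S i) (S (n - i)) := by
    rw [hS i hi (by omega), hS (n - i) (by omega) (by omega)]
    exact Hs.commute_compression (hinv i hi (by omega)) (hinv (n - i) (by omega) (by omega))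
      (hVcomm i (n - i) hi (by omega) (by omega) (by omega))
  have hE' := hE (n - i) (by omega) (by omega)
  have hfund' := hfund (n - i) (by omega) (by omega)
  rw [hni] at hE' hfund'
  have hker := apply_adjoint_commutator_apply_eq_zero hDpos.isSelfAdjoint hcomm (hE i hi hin) hE'
    (hfund i hi hin) hfund' hx
  have hran : (adjoint (E i) * adjoint (E (n - i)) - adjoint (E (n - i)) * adjoint (E i))
      (D (S n x)) ∈ (LinearMap.ker (D : Hs →ₗ[ℂ] Hs))ᗮ := by
    rw [← hQran, sub_apply]
    exact sub_mem (adjoint_apply_mem_range_of_eq_mul_mul hQsa (hEQ i hi hin) _)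
      (adjoint_apply_mem_range_of_eq_mul_mul hQsa (hEQ (n - i) (by omega) (by omega)) _)
  exact Submodule.disjoint_def.mp (Submodule.orthogonal_disjoint _) _ hker hran

/-- Let `n ≥ 2` and let `(V₁,…,Vₙ)` be a commuting tuple on `K` with `Vₙ` an isometry,
`Vⱼ = V_{n−j}* Vₙ` and `H` invariant under each `Vⱼ*`.  With `Sⱼ = P_H Vⱼ|_H`, `D` the positive
square root of `I − Sₙ* Sₙ`, `Q` the orthogonal projection of `H` onto `(ker D)ᗮ`, and
`E₁,…,E_{n−1}` operators with `Eⱼ = Q Eⱼ Q`, `Sⱼ − S_{n−j}* Sₙ = D Eⱼ D` and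
`D Sⱼ = Eⱼ D + E_{n−j}* D Sₙ`, the operator `(Eᵢ* E_{n−i}* − E_{n−i}* Eᵢ*) D Sₙ` vanishes on
`ker D` for `i = 1,…,n−1`. -/
theorem stmt_4 {K : Type*} [NormedAddCommGroup K] [InnerProductSpace ℂ K] [CompleteSpace K]
    (Hs : Submodule ℂ K) [CompleteSpace Hs]
    (n : ℕ) (hn : 2 ≤ n)
    (V : ℕ → (K →L[ℂ] K))
    (hVcomm : ∀ i j, 1 ≤ i → i ≤ n → 1 ≤ j → j ≤ n → V i * V j = V j * V i)
    (hViso : ∀ x : K, ‖V n x‖ = ‖x‖)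
    (hVrel : ∀ j, 1 ≤ j → j ≤ n - 1 → V j = adjoint (V (n - j)) * V n)
    (hinv : ∀ j, 1 ≤ j → j ≤ n → ∀ h : Hs, adjoint (V j) (h : K) ∈ Hs)
    (S : ℕ → (Hs →L[ℂ] Hs))
    (hS : ∀ j, 1 ≤ j → j ≤ n →
      S j = Hs.orthogonalProjectionOnto.comp ((V j).comp Hs.subtypeL))
    (D : Hs →L[ℂ] Hs)
    (hDpos : D.IsPositive)
    (hDsq : D * D = 1 - adjoint (S n) * S n)
    (Q : Hs →L[ℂ] Hs)
    -- `Q` is the orthogonal projection of `H` onto `(ker D)ᗮ`: the self-adjoint idempotent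
    -- with range `(ker D)ᗮ`
    (hQidem : Q * Q = Q) (hQsa : IsSelfAdjoint Q)
    (hQran : LinearMap.range (Q : Hs →ₗ[ℂ] Hs) = (LinearMap.ker (D : Hs →ₗ[ℂ] Hs))ᗮ)
    (E : ℕ → (Hs →L[ℂ] Hs))
    (hEQ : ∀ j, 1 ≤ j → j ≤ n - 1 → E j = Q * E j * Q)
    (hE : ∀ j, 1 ≤ j → j ≤ n - 1 → S j - adjoint (S (n - j)) * S n = D * E j * D)
    (hfund : ∀ j, 1 ≤ j → j ≤ n - 1 →
      D * S j = E j * D + adjoint (E (n - j)) * D * S n) :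
    ∀ i, 1 ≤ i → i ≤ n - 1 → ∀ x : Hs, D x = 0 →
      (adjoint (E i) * adjoint (E (n - i)) - adjoint (E (n - i)) * adjoint (E i))
        (D (S n x)) = 0 :=
  stmt_4_general Hs n V hVcomm hinv S hS D hDpos Q hQsa hQran E hEQ hE hfund
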